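/- arXiv:1905.06513 — 2 statements merged into one kernel-verified Lean document; each statement's English description precedes it below -/
import Mathlib

section
/- Let p be an odd prime, r = p^m, q = r². For every l with 0 ≤ l ≤ r − 1 and every d ∈ {0, 1}: if l + d is even and l + dr ≥ 2, then l + dr belongs to Σ(g, q); and if l + d is odd, then l + dr + 1 belongs to Σ(eg, q). In particular, for every even integer n with 2 ≤ n ≤ 2r there exists an MDS self-dual code over F_q of length n. -/
open Finset

/-- Δ_S(a) = ∏_{b ∈ S, b ≠ a} (a − b). -/
def deltaS {F : Type*} [Field F] [DecidableEq F] (S : Finset F) (a : F) : F :=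
  ∏ b ∈ S.erase a, (a - b)

/-- n ∈ Σ(g,q): n is even, n ≥ 2, and there is S ⊆ F_q with |S| = n such that
the quadratic-character values η_q(Δ_S(a)) agree for all a ∈ S
(equivalently, the Δ_S(a) are all squares or all nonsquares). -/
def SigmaG (F : Type*) [Field F] [DecidableEq F] (n : ℕ) : Prop :=
  Even n ∧ 2 ≤ n ∧ ∃ S : Finset F, S.card = n ∧
    ((∀ a ∈ S, IsSquare (deltaS S a)) ∨ (∀ a ∈ S, ¬ IsSquare (deltaS S a)))

/-- n ∈ Σ(eg,q): n is even, n ≥ 2, and there is S ⊆ F_q with |S| = n − 1 such that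
η_q(−Δ_S(a)) = 1, i.e. −Δ_S(a) is a square, for all a ∈ S. -/
def SigmaEG (F : Type*) [Field F] [DecidableEq F] (n : ℕ) : Prop :=
  Even n ∧ 2 ≤ n ∧ ∃ S : Finset F, S.card = n - 1 ∧
    ∀ a ∈ S, IsSquare (-(deltaS S a))

/-!
Let `q = r²` with `r` odd and a power of the characteristic. Every element of the subfield
`K = {x | x ^ r = x}` and of the norm-one group `U = {x | x ^ (r + 1) = 1}` is a square in `𝔽_q`,
because `r - 1` and `r + 1` both divide `(q - 1) / 2`; in particular `-1` is a square, so
`Σ(g, q)` and `Σ(eg, q)` only need sets `S` of size `≤ 2r` on which every `Δ_S(a)` is a square.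
If `S` is the root set of a monic divisor `f` of `X ^ q - X`, then `Δ_S(a) = f'(a)`, and:
* `|S| ≤ r`: any `S ⊆ K`, since the Frobenius `x ↦ x ^ r` fixes each `Δ_S(a)`;
* `r < |S| < 2r`: `U` together with a set `B ⊆ K \ {±1}` made of pairs `{b, b⁻¹}` and
  possibly `0`; here `Δ_U(a) = a ^ r`, and `(a - b)(a - b⁻¹) = -a b⁻¹ (a - b) ^ (r + 1)` is a
  square for `a ∈ U`;
* `|S| = 2r`: the roots of `(X ^ r + X) ^ 2 - 1`, for which `Δ_S(a) = 2 (a ^ r + a) ∈ K`.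
For such an `S` of even size, column multipliers `v_a` with `v_a² = Δ_S(a)⁻¹` make the
generalized Reed–Solomon code of dimension `|S| / 2` self-orthogonal, hence self-dual, and it is
MDS. Self-orthogonality is Lagrange interpolation: `∑_a f(a) / Δ_S(a)` is the coefficient of
`X ^ (|S| - 1)` in `f`, which vanishes when `deg f < |S| - 1`.
-/

open Polynomial
open scoped Pointwise

theorem Nat.sq_div_two_of_odd {r : ℕ} (hr : Odd r) : r ^ 2 / 2 = (r - 1) / 2 * (r + 1) := by
  obtain ⟨u, rfl⟩ := hr
  have hsq : (2 * u + 1) ^ 2 = 2 * (u * (2 * u + 1 + 1)) + 1 := by ring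
  rw [hsq, show (2 * u + 1 - 1) / 2 = u by omega]
  omega

theorem Nat.even_add_mul_iff_of_odd {l d r : ℕ} (hr : Odd r) :
    Even (l + d * r) ↔ Even (l + d) := by
  simp [Nat.even_add, Nat.even_mul, Nat.not_even_iff_odd.mpr hr]

theorem Finset.exists_subset_card_eq_disjoint_inv {α : Type*} [DecidableEq α] [InvolutiveInv α]
    {V : Finset α} (hfix : ∀ x ∈ V, x⁻¹ ≠ x) :
    ∀ {t : ℕ}, 2 * t ≤ #V → ∃ A ⊆ V, #A = t ∧ Disjoint A A⁻¹
  | 0, _ => ⟨∅, empty_subset _, rfl, disjoint_empty_left _⟩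
  | t + 1, ht => by
    obtain ⟨A, hAV, hA, hdisj⟩ := exists_subset_card_eq_disjoint_inv hfix (t := t) (by omega)
    have hlt : #(A ∪ A⁻¹) < #V := by
      grw [card_union_le, card_inv, hA]
      omega
    obtain ⟨x, hxV, hx⟩ := exists_mem_notMem_of_card_lt_card hlt
    rw [mem_union, not_or, mem_inv'] at hx
    refine ⟨insert x A, insert_subset hxV hAV, by rw [card_insert_of_notMem hx.1, hA], ?_⟩
    rw [inv_insert, disjoint_insert_left, disjoint_insert_right, mem_insert, mem_inv']
    exact ⟨fun h => h.elim (hfix x hxV).symm hx.2, hx.2, hdisj⟩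

namespace Polynomial

theorem mul_mem_degreeLT {R : Type*} [Semiring R] [NoZeroDivisors R] {f g : R[X]} {k l : ℕ}
    (hf : f ∈ degreeLT R k) (hg : g ∈ degreeLT R l) : f * g ∈ degreeLT R (k + l - 1) := by
  rcases eq_or_ne f 0 with rfl | hf0
  · simp
  rcases eq_or_ne g 0 with rfl | hg0
  · simp
  rw [mem_degreeLT, degree_eq_natDegree hf0] at hf
  rw [mem_degreeLT, degree_eq_natDegree hg0] at hg
  rw [mem_degreeLT, degree_eq_natDegree (mul_ne_zero hf0 hg0), natDegree_mul hf0 hg0]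
  norm_cast at hf hg ⊢
  omega

variable {R : Type*} [CommRing R] [Nontrivial R] {r : ℕ}

theorem monic_X_pow_add_X (hr : 1 < r) : (X ^ r + X : R[X]).Monic :=
  monic_X_pow_add (by rw [degree_X]; exact_mod_cast hr)

theorem natDegree_sq_X_pow_add_X_sub_one (hr : 1 < r) :
    ((X ^ r + X) ^ 2 - 1 : R[X]).natDegree = 2 * r := by
  rw [← C_1, natDegree_sub_C, (monic_X_pow_add_X hr).natDegree_pow,
    natDegree_add_eq_left_of_natDegree_lt (by simpa using hr), natDegree_X_pow, mul_comm]

theorem monic_sq_X_pow_add_X_sub_one (hr : 1 < r) : ((X ^ r + X) ^ 2 - 1 : R[X]).Monic := by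
  refine ((monic_X_pow_add_X hr).pow 2).sub_of_left ?_
  rw [degree_one, ← natDegree_pos_iff_degree_pos, ← natDegree_sub_C (a := (1 : R)), C_1,
    natDegree_sq_X_pow_add_X_sub_one hr]
  omega

end Polynomial

section Delta

variable {F : Type*} [Field F] [DecidableEq F]

theorem deltaS_union_of_mem_left {S T : Finset F} (hST : Disjoint S T) {a : F} (ha : a ∈ S) :
    deltaS (S ∪ T) a = deltaS S a * ∏ b ∈ T, (a - b) := by
  rw [deltaS, erase_union_distrib, erase_eq_of_notMem (disjoint_left.mp hST ha),
    prod_union (disjoint_of_subset_left (erase_subset a S) hST), deltaS]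

theorem deltaS_eq_eval_derivative_nodal {S : Finset F} {a : F} (ha : a ∈ S) :
    deltaS S a = (Lagrange.nodal S id).derivative.eval a :=
  ((Lagrange.eval_nodal_derivative_eval_node_eq (v := id) ha).trans Lagrange.eval_nodal).symm

theorem nodalWeight_equivFin_symm (S : Finset F) (i : Fin #S) :
    Lagrange.nodalWeight univ (fun j => (S.equivFin.symm j : F)) i =
      (deltaS S (S.equivFin.symm i))⁻¹ := by
  rw [Lagrange.nodalWeight, prod_inv_distrib, deltaS]
  congr 1
  refine prod_nbij (fun j => (S.equivFin.symm j : F)) ?_ ?_ ?_ (fun _ _ => rfl)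
  · intro j hj
    exact mem_erase.mpr ⟨fun h => (mem_erase.mp hj).1 (S.equivFin.symm.injective
      (Subtype.val_injective h)), (S.equivFin.symm j).2⟩
  · exact (Subtype.val_injective.comp S.equivFin.symm.injective).injOn
  · intro b hb
    obtain ⟨hbi, hbS⟩ := mem_erase.mp (Finset.mem_coe.mp hb)
    refine ⟨S.equivFin ⟨b, hbS⟩, mem_coe.mpr (mem_erase.mpr ⟨?_, mem_univ _⟩), by simp⟩
    rintro h
    exact hbi (by rw [← h]; simp)

end Delta

section FiniteField

variable {F : Type*} [Field F] [Fintype F]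

theorem FiniteField.isSquare_of_pow_eq_one (hF : ringChar F ≠ 2) {x : F} {k : ℕ}
    (hk : k ∣ Fintype.card F / 2) (hx : x ^ k = 1) : IsSquare x := by
  rcases eq_or_ne x 0 with rfl | hx0
  · exact ⟨0, by simp⟩
  obtain ⟨j, hj⟩ := hk
  rw [FiniteField.isSquare_iff hF hx0, hj, pow_mul, hx, one_pow]

theorem nodal_eq_of_dvd_X_pow_card_sub_X [DecidableEq F] {f : F[X]} (hf : f.Monic)
    (hdvd : f ∣ X ^ Fintype.card F - X) {S : Finset F} (hS : ∀ x, x ∈ S ↔ f.eval x = 0) :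
    Lagrange.nodal S id = f := by
  have hq : (X ^ Fintype.card F - X : F[X]) ≠ 0 :=
    FiniteField.X_pow_card_sub_X_ne_zero F Fintype.one_lt_card
  have hsplit : f.Splits := by
    refine Splits.of_dvd ?_ hq hdvd
    rw [splits_iff_card_roots, FiniteField.roots_X_pow_card_sub_X,
      FiniteField.X_pow_card_sub_X_natDegree_eq F Fintype.one_lt_card]
    rfl
  have hnodup : f.roots.Nodup := by
    refine Multiset.nodup_of_le ?_ (univ : Finset F).nodup
    rw [← FiniteField.roots_X_pow_card_sub_X F]
    exact roots.le_of_dvd hq hdvd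
  have hS' : S = f.roots.toFinset := by
    ext x
    simp [hS, mem_roots hf.ne_zero]
  rw [Lagrange.nodal, prod_eq_multiset_prod, hS', Multiset.toFinset_val, hnodup.dedup]
  exact (hsplit.eq_prod_roots_of_monic hf).symm

end FiniteField

section QuadraticExtension

variable {F : Type*} [Field F] [Fintype F] {r : ℕ}

theorem two_le_of_card_eq_sq (hF : Fintype.card F = r ^ 2) : 2 ≤ r := by
  have := hF ▸ Fintype.one_lt_card (α := F)
  by_contra! h
  interval_cases r <;> simp at this

theorem natCast_eq_zero_of_card_eq_sq (hF : Fintype.card F = r ^ 2) : (r : F) = 0 := by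
  have h := FiniteField.cast_card_eq_zero F
  rw [hF, Nat.cast_pow] at h
  exact pow_eq_zero_iff two_ne_zero |>.mp h

theorem ringChar_ne_two_of_card_eq_sq (hF : Fintype.card F = r ^ 2) (hr : Odd r) :
    ringChar F ≠ 2 := by
  rw [Ne, FiniteField.even_card_iff_char_two, hF, Nat.odd_iff.mp hr.pow]
  exact one_ne_zero

theorem isSquare_of_pow_succ_eq_one (hF : Fintype.card F = r ^ 2) (hr : Odd r) {x : F}
    (hx : x ^ (r + 1) = 1) : IsSquare x :=
  FiniteField.isSquare_of_pow_eq_one (ringChar_ne_two_of_card_eq_sq hF hr)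
    (hF ▸ Nat.sq_div_two_of_odd hr ▸ dvd_mul_left _ _) hx

theorem isSquare_of_pow_eq_self (hF : Fintype.card F = r ^ 2) (hr : Odd r) {x : F}
    (hx : x ^ r = x) : IsSquare x := by
  rcases eq_or_ne x 0 with rfl | hx0
  · exact ⟨0, by simp⟩
  refine FiniteField.isSquare_of_pow_eq_one (ringChar_ne_two_of_card_eq_sq hF hr) (k := r - 1)
    ⟨(r + 1) / 2, ?_⟩ ?_
  · obtain ⟨u, rfl⟩ := hr
    rw [hF, Nat.sq_div_two_of_odd ⟨u, rfl⟩, show (2 * u + 1 - 1) / 2 = u by omega,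
      show (2 * u + 1 + 1) / 2 = u + 1 by omega, Nat.add_sub_cancel]
    ring
  · rw [← mul_left_inj' hx0, ← pow_succ, Nat.sub_add_cancel hr.pos, hx, one_mul]

theorem isSquare_neg_one_of_card_eq_sq (hF : Fintype.card F = r ^ 2) (hr : Odd r) :
    IsSquare (-1 : F) :=
  isSquare_of_pow_eq_self hF hr hr.neg_one_pow

theorem X_pow_succ_sub_one_dvd_X_pow_card_sub_X (hF : Fintype.card F = r ^ 2) :
    (X ^ (r + 1) - 1 : F[X]) ∣ X ^ Fintype.card F - X := by
  have hr := two_le_of_card_eq_sq hF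
  have hq : Fintype.card F = (r + 1) * (r - 1) + 1 := by
    rw [hF]; zify [hr, show 1 ≤ r by omega]; ring
  rw [hq, pow_succ (X : F[X]) ((r + 1) * (r - 1)), ← sub_one_mul, pow_mul]
  exact dvd_mul_of_dvd_left (by simpa using sub_dvd_pow_sub_pow (X ^ (r + 1) : F[X]) 1 (r - 1)) _

variable [DecidableEq F]

theorem nodal_pow_succ_eq_one (hF : Fintype.card F = r ^ 2) :
    Lagrange.nodal {x : F | x ^ (r + 1) = 1} id = X ^ (r + 1) - 1 :=
  nodal_eq_of_dvd_X_pow_card_sub_X (monic_X_pow_sub_C 1 r.succ_ne_zero)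
    (X_pow_succ_sub_one_dvd_X_pow_card_sub_X hF) (by simp [sub_eq_zero])

theorem card_pow_succ_eq_one (hF : Fintype.card F = r ^ 2) :
    #{x : F | x ^ (r + 1) = 1} = r + 1 := by
  rw [← Lagrange.natDegree_nodal (v := id), nodal_pow_succ_eq_one hF, ← C_1,
    natDegree_X_pow_sub_C]

theorem deltaS_pow_succ_eq_one (hF : Fintype.card F = r ^ 2) {a : F} (ha : a ^ (r + 1) = 1) :
    deltaS {x : F | x ^ (r + 1) = 1} a = a ^ r := by
  rw [deltaS_eq_eval_derivative_nodal (by simpa using ha), nodal_pow_succ_eq_one hF]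
  simp [natCast_eq_zero_of_card_eq_sq hF]

end QuadraticExtension

section Frobenius

variable {F : Type*} [Field F] [Fintype F] {p m r : ℕ} [Fact p.Prime] [CharP F p]

theorem X_pow_sub_X_dvd_X_pow_card_sub_X (hr : r = p ^ m) (hF : Fintype.card F = r ^ 2) :
    (X ^ r - X : F[X]) ∣ X ^ Fintype.card F - X := by
  have hfrob : (X ^ r - X : F[X]) ^ r = X ^ Fintype.card F - X ^ r := by
    rw [hF, sq, pow_mul, hr, sub_pow_char_pow]
  have : (X ^ Fintype.card F - X : F[X]) = (X ^ r - X) ^ r + (X ^ r - X) := by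
    rw [hfrob]; ring
  rw [this]
  exact dvd_add (dvd_pow_self _ (by have := two_le_of_card_eq_sq hF; omega)) dvd_rfl

theorem sq_X_pow_add_X_sub_one_dvd_X_pow_card_sub_X (hr : r = p ^ m)
    (hF : Fintype.card F = r ^ 2) (hodd : Odd r) :
    ((X ^ r + X) ^ 2 - 1 : F[X]) ∣ X ^ Fintype.card F - X := by
  have hfrob : (X ^ r + X : F[X]) ^ r = X ^ Fintype.card F + X ^ r := by
    rw [hF, sq, pow_mul, hr, add_pow_char_pow]
  obtain ⟨u, hu⟩ := hodd
  have : (X ^ Fintype.card F - X : F[X]) = (((X ^ r + X) ^ 2) ^ u - 1) * (X ^ r + X) :=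
    calc X ^ Fintype.card F - X = (X ^ r + X : F[X]) ^ r - (X ^ r + X) := by rw [hfrob]; ring
      _ = _ := by generalize (X ^ r + X : F[X]) = A; rw [hu]; ring
  rw [this]
  exact dvd_mul_of_dvd_left (by simpa using sub_dvd_pow_sub_pow ((X ^ r + X : F[X]) ^ 2) 1 u) _

theorem isSquare_sub_mul_sub_inv (hr : r = p ^ m) (hF : Fintype.card F = r ^ 2) (hodd : Odd r)
    {a b : F} (ha : a ^ (r + 1) = 1) (hb : b ^ r = b) (hb0 : b ≠ 0) :
    IsSquare ((a - b) * (a - b⁻¹)) := by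
  have ha0 : a ≠ 0 := by rintro rfl; simp at ha
  have har : a ^ r = a⁻¹ := eq_inv_of_mul_eq_one_left (by rw [← pow_succ, ha])
  have key : (a - b) * (a - b⁻¹) = -1 * a * b⁻¹ * (a - b) ^ (r + 1) := by
    rw [pow_succ, hr, sub_pow_char_pow, ← hr, har, hb]
    field_simp
    ring
  rw [key]
  refine (((isSquare_neg_one_of_card_eq_sq hF hodd).mul
    (isSquare_of_pow_succ_eq_one hF hodd ha)).mul
    (isSquare_of_pow_eq_self hF hodd (by rw [inv_pow, hb]))).mul ?_
  exact hodd.add_one.isSquare_pow _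

variable [DecidableEq F]

theorem card_pow_eq_self (hr : r = p ^ m) (hF : Fintype.card F = r ^ 2) :
    #{x : F | x ^ r = x} = r := by
  have h2 := two_le_of_card_eq_sq hF
  have hmonic : (X ^ r - X : F[X]).Monic := monic_X_pow_sub (by rw [degree_X]; exact_mod_cast h2)
  rw [← Lagrange.natDegree_nodal (v := id),
    nodal_eq_of_dvd_X_pow_card_sub_X hmonic (X_pow_sub_X_dvd_X_pow_card_sub_X hr hF)
      (by simp [sub_eq_zero]),
    FiniteField.X_pow_card_sub_X_natDegree_eq F h2]

theorem isSquare_deltaS_of_pow_eq_self (hr : r = p ^ m) (hF : Fintype.card F = r ^ 2)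
    (hodd : Odd r) {S : Finset F} (hS : ∀ x ∈ S, x ^ r = x) {a : F} (ha : a ∈ S) :
    IsSquare (deltaS S a) := by
  refine isSquare_of_pow_eq_self hF hodd ?_
  rw [deltaS, ← prod_pow]
  refine prod_congr rfl fun b hb => ?_
  rw [hr, sub_pow_char_pow, ← hr, hS a ha, hS b (mem_of_mem_erase hb)]

theorem exists_card_eq_isSquare_deltaS_of_le (hr : r = p ^ m) (hF : Fintype.card F = r ^ 2)
    (hodd : Odd r) {s : ℕ} (hs : s ≤ r) :
    ∃ S : Finset F, #S = s ∧ ∀ a ∈ S, IsSquare (deltaS S a) := by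
  obtain ⟨S, hSK, hS⟩ := exists_subset_card_eq (s := {x : F | x ^ r = x})
    (card_pow_eq_self hr hF ▸ hs)
  exact ⟨S, hS, fun a => isSquare_deltaS_of_pow_eq_self hr hF hodd fun x hx => by
    simpa using hSK hx⟩

theorem exists_card_eq_disjoint_inv_of_pow_eq_self (hr : r = p ^ m)
    (hF : Fintype.card F = r ^ 2) (hodd : Odd r) {j : ℕ} (hj : 2 * j ≤ r - 3) :
    ∃ A : Finset F, #A = j ∧ Disjoint A A⁻¹ ∧
      ∀ b ∈ A ∪ A⁻¹, b ^ r = b ∧ b ≠ 0 ∧ b ≠ 1 ∧ b ≠ -1 := by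
  set V : Finset F := ({x : F | x ^ r = x} : Finset F) \ {0, 1, -1}
  have hV : ∀ x, x ∈ V ↔ x ^ r = x ∧ x ≠ 0 ∧ x ≠ 1 ∧ x ≠ -1 := by simp [V]
  have hVcard : #V = r - 3 := by
    have hr0 : r ≠ 0 := hodd.pos.ne'
    rw [card_sdiff_of_subset (by simp [subset_iff, hr0, hodd.neg_one_pow]), card_pow_eq_self hr hF,
      card_insert_of_notMem (by simp), card_pair (Ring.neg_one_ne_one_of_char_ne_two
        (ringChar_ne_two_of_card_eq_sq hF hodd)).symm]
  have hfix : ∀ x ∈ V, x⁻¹ ≠ x := by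
    intro x hx hinv
    obtain ⟨-, hx0, hx1, hx1'⟩ := (hV x).mp hx
    have hxx : x * x = 1 := by nth_rw 2 [← hinv]; exact mul_inv_cancel₀ hx0
    rcases mul_self_eq_one_iff.mp hxx with h | h
    exacts [hx1 h, hx1' h]
  have hVinv : ∀ x ∈ V, x⁻¹ ∈ V := by
    intro x hx
    obtain ⟨hxr, hx0, hx1, hx1'⟩ := (hV x).mp hx
    simp [hV, inv_pow, hxr, hx0, hx1, inv_eq_iff_eq_inv, hx1']
  obtain ⟨A, hAV, hA, hdisj⟩ := exists_subset_card_eq_disjoint_inv hfix (hVcard ▸ hj)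
  refine ⟨A, hA, hdisj, fun b hb => (hV b).mp ?_⟩
  exact union_subset hAV (fun x hx => inv_inv x ▸ hVinv _ (hAV (mem_inv'.mp hx))) hb

theorem exists_card_eq_isSquare_prod_sub (hr : r = p ^ m) (hF : Fintype.card F = r ^ 2)
    (hodd : Odd r) {t : ℕ} (ht : t ≤ r - 2) :
    ∃ B : Finset F, #B = t ∧ (∀ b ∈ B, b ^ r = b ∧ b ≠ 1 ∧ b ≠ -1) ∧
      ∀ a : F, a ^ (r + 1) = 1 → IsSquare (∏ b ∈ B, (a - b)) := by
  obtain ⟨j, hj⟩ := Nat.even_or_odd' t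
  obtain ⟨A, hA, hdisj, hAK⟩ := exists_card_eq_disjoint_inv_of_pow_eq_self hr hF hodd (j := j)
    (by rcases hj with rfl | rfl <;> obtain ⟨u, rfl⟩ := hodd <;> omega)
  have hcard : #(A ∪ A⁻¹) = 2 * j := by
    rw [card_union_of_disjoint hdisj, card_inv, hA, two_mul]
  have hpairs : ∀ a : F, a ^ (r + 1) = 1 → IsSquare (∏ b ∈ A ∪ A⁻¹, (a - b)) := by
    intro a ha
    rw [prod_union hdisj, prod_inv_index, ← prod_mul_distrib]
    refine isSquare_prod _ fun b hb => ?_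
    obtain ⟨hbr, hb0, -⟩ := hAK b (subset_union_left hb)
    exact isSquare_sub_mul_sub_inv hr hF hodd ha hbr hb0
  rcases hj with rfl | rfl
  · exact ⟨A ∪ A⁻¹, hcard, fun b hb => (hAK b hb).imp_right And.right, hpairs⟩
  · have h0 : (0 : F) ∉ A ∪ A⁻¹ := fun h => (hAK 0 h).2.1 rfl
    refine ⟨insert 0 (A ∪ A⁻¹), by rw [card_insert_of_notMem h0, hcard], ?_, ?_⟩
    · intro b hb
      rcases mem_insert.mp hb with rfl | hb
      · exact ⟨zero_pow hodd.pos.ne', zero_ne_one, by simp⟩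
      · exact (hAK b hb).imp_right And.right
    · intro a ha
      rw [prod_insert h0, sub_zero]
      exact (isSquare_of_pow_succ_eq_one hF hodd ha).mul (hpairs a ha)

theorem exists_card_eq_isSquare_deltaS_of_lt (hr : r = p ^ m) (hF : Fintype.card F = r ^ 2)
    (hodd : Odd r) {s : ℕ} (hs₁ : r < s) (hs₂ : s < 2 * r) :
    ∃ S : Finset F, #S = s ∧ ∀ a ∈ S, IsSquare (deltaS S a) := by
  obtain ⟨B, hB, hBK, hBsq⟩ := exists_card_eq_isSquare_prod_sub hr hF hodd (t := s - (r + 1))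
    (by omega)
  set U : Finset F := {x : F | x ^ (r + 1) = 1}
  have hdisj : Disjoint U B := by
    refine disjoint_left.mpr fun a haU haB => ?_
    obtain ⟨har, ha1, ha1'⟩ := hBK a haB
    have : a * a = 1 := by simpa [U, pow_succ, har] using haU
    exact (mul_self_eq_one_iff.mp this).elim ha1 ha1'
  refine ⟨U ∪ B, by rw [card_union_of_disjoint hdisj, card_pow_succ_eq_one hF, hB]; omega, ?_⟩
  intro a ha
  rcases mem_union.mp ha with haU | haB
  · have ha' : a ^ (r + 1) = 1 := by simpa [U] using haU
    rw [deltaS_union_of_mem_left hdisj haU, deltaS_pow_succ_eq_one hF ha']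
    exact ((isSquare_of_pow_succ_eq_one hF hodd ha').pow r).mul (hBsq a ha')
  · have har : a ^ r = a := (hBK a haB).1
    have hU : ∏ y ∈ U, (a - y) = a ^ (r + 1) - 1 := by
      have hnodal : Lagrange.nodal U id = X ^ (r + 1) - 1 := nodal_pow_succ_eq_one hF
      simpa [hnodal] using (Lagrange.eval_nodal (s := U) (v := id) (x := a)).symm
    rw [union_comm, deltaS_union_of_mem_left hdisj.symm haB, hU]
    refine (isSquare_deltaS_of_pow_eq_self hr hF hodd (fun x hx => (hBK x hx).1) haB).mul ?_
    refine isSquare_of_pow_eq_self hF hodd ?_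
    rw [hr, sub_pow_char_pow, ← hr, one_pow, ← pow_mul, mul_comm, pow_mul, har]

theorem nodal_sq_pow_add_self_eq_one (hr : r = p ^ m) (hF : Fintype.card F = r ^ 2)
    (hodd : Odd r) :
    Lagrange.nodal {x : F | (x ^ r + x) ^ 2 = 1} id = (X ^ r + X) ^ 2 - 1 :=
  nodal_eq_of_dvd_X_pow_card_sub_X (monic_sq_X_pow_add_X_sub_one (two_le_of_card_eq_sq hF))
    (sq_X_pow_add_X_sub_one_dvd_X_pow_card_sub_X hr hF hodd) (by simp [sub_eq_zero])

theorem card_sq_pow_add_self_eq_one (hr : r = p ^ m) (hF : Fintype.card F = r ^ 2)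
    (hodd : Odd r) : #{x : F | (x ^ r + x) ^ 2 = 1} = 2 * r := by
  rw [← Lagrange.natDegree_nodal (v := id), nodal_sq_pow_add_self_eq_one hr hF hodd,
    natDegree_sq_X_pow_add_X_sub_one (two_le_of_card_eq_sq hF)]

theorem isSquare_deltaS_sq_pow_add_self_eq_one (hr : r = p ^ m) (hF : Fintype.card F = r ^ 2)
    (hodd : Odd r) {a : F} (ha : (a ^ r + a) ^ 2 = 1) :
    IsSquare (deltaS {x : F | (x ^ r + x) ^ 2 = 1} a) := by
  rw [deltaS_eq_eval_derivative_nodal (by simpa using ha), nodal_sq_pow_add_self_eq_one hr hF hodd]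
  simp only [derivative_sub, derivative_one, sub_zero, derivative_sq, derivative_add,
    derivative_X_pow, derivative_X, eval_mul, eval_add, eval_C, eval_X, eval_pow, eval_one,
    natCast_eq_zero_of_card_eq_sq hF, zero_mul, zero_add, mul_one]
  refine isSquare_of_pow_eq_self hF hodd ?_
  have h2 : (2 : F) ^ r = 2 := by rw [hr, ← one_add_one_eq_two, add_pow_char_pow, one_pow]
  rw [mul_pow, h2, hr, add_pow_char_pow, ← pow_mul, ← sq, ← hr, ← hF, FiniteField.pow_card,
    add_comm a]

theorem exists_card_eq_isSquare_deltaS (hr : r = p ^ m) (hF : Fintype.card F = r ^ 2)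
    (hodd : Odd r) {s : ℕ} (hs : s ≤ 2 * r) :
    ∃ S : Finset F, #S = s ∧ ∀ a ∈ S, IsSquare (deltaS S a) := by
  rcases le_or_gt s r with hsr | hsr
  · exact exists_card_eq_isSquare_deltaS_of_le hr hF hodd hsr
  rcases hs.lt_or_eq with hs | rfl
  · exact exists_card_eq_isSquare_deltaS_of_lt hr hF hodd hsr hs
  · exact ⟨_, card_sq_pow_add_self_eq_one hr hF hodd, fun a ha =>
      isSquare_deltaS_sq_pow_add_self_eq_one hr hF hodd (by simpa using ha)⟩

end Frobenius

section SelfDual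

variable {F : Type*} [Field F] {ι : Type*} [Fintype ι]

theorem dotProductBilin_nondegenerate [DecidableEq ι] :
    (dotProductBilin F F : LinearMap.BilinForm F (ι → F)).Nondegenerate :=
  ⟨fun x hx => funext fun i => by simpa using hx (Pi.single i 1),
    fun y hy => funext fun i => by simpa using hy (Pi.single i 1)⟩

theorem coe_eq_setOf_dotProduct_eq_zero {C : Submodule F (ι → F)}
    (horth : ∀ c ∈ C, ∀ c' ∈ C, c ⬝ᵥ c' = 0)
    (hdim : 2 * Module.finrank F C = Fintype.card ι) :
    (C : Set (ι → F)) = {v | ∀ c ∈ C, v ⬝ᵥ c = 0} := by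
  classical
  set B : LinearMap.BilinForm F (ι → F) := dotProductBilin F F
  have hle : C ≤ B.orthogonal C := fun c hc =>
    LinearMap.BilinForm.mem_orthogonal_iff.mpr fun c' hc' => horth c' hc' c hc
  have hC : C = B.orthogonal C := by
    refine Submodule.eq_of_le_of_finrank_le hle ?_
    rw [LinearMap.BilinForm.finrank_orthogonal dotProductBilin_nondegenerate,
      Module.finrank_fintype_fun_eq_card]
    omega
  ext v
  rw [SetLike.mem_coe, hC, LinearMap.BilinForm.mem_orthogonal_iff, ← hC]
  simp [B, dotProduct_comm]

end SelfDual

section GeneralizedReedSolomon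

variable {F : Type*} [Field F] {ι : Type*} (α v : ι → F)

noncomputable def grsEval : F[X] →ₗ[F] ι → F := LinearMap.pi fun i => v i • leval (α i)

noncomputable def grsCode (k : ℕ) : Submodule F (ι → F) := (degreeLT F k).map (grsEval α v)

variable {α v}

@[simp]
theorem grsEval_apply (f : F[X]) (i : ι) : grsEval α v f i = v i * f.eval (α i) := rfl

variable [Fintype ι]

theorem grsEval_eq_zero (hα : Function.Injective α) (hv : ∀ i, v i ≠ 0) {f : F[X]}
    (hf : f.degree < Fintype.card ι) (h : grsEval α v f = 0) : f = 0 := by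
  classical
  refine eq_zero_of_degree_lt_of_eval_index_eq_zero univ hα.injOn hf fun i _ => ?_
  simpa [hv] using congrFun h i

theorem finrank_grsCode (hα : Function.Injective α) (hv : ∀ i, v i ≠ 0) {k : ℕ}
    (hk : k ≤ Fintype.card ι) : Module.finrank F (grsCode α v k) = k := by
  have hinj : Function.Injective ((grsEval α v).comp (degreeLT F k).subtype) := by
    rw [← LinearMap.ker_eq_bot, LinearMap.ker_eq_bot']
    intro f hf
    refine Subtype.ext (grsEval_eq_zero hα hv ?_ hf)
    exact (mem_degreeLT.mp f.2).trans_le (by exact_mod_cast hk)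
  rw [grsCode, ← Submodule.range_subtype (degreeLT F k), ← LinearMap.range_comp,
    LinearMap.finrank_range_of_inj hinj, Module.finrank_eq_card_basis (degreeLT.basis F k),
    Fintype.card_fin]

theorem grsCode_dotProduct_eq_zero [DecidableEq ι] (hα : Function.Injective α)
    (hv : ∀ i, v i ^ 2 = Lagrange.nodalWeight univ α i) {k : ℕ}
    (hk : 2 * k ≤ Fintype.card ι) :
    ∀ c ∈ grsCode α v k, ∀ c' ∈ grsCode α v k, c ⬝ᵥ c' = 0 := by
  rintro _ ⟨f, hf, rfl⟩ _ ⟨g, hg, rfl⟩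
  have hdeg := mem_degreeLT.mp (mul_mem_degreeLT hf hg)
  have hcoeff : (f * g).coeff (#(univ : Finset ι) - 1) = 0 :=
    coeff_eq_zero_of_degree_lt (hdeg.trans_le (by rw [card_univ]; exact_mod_cast (by omega)))
  rw [Lagrange.coeff_eq_sum hα.injOn
    (hdeg.trans_le (by rw [card_univ]; exact_mod_cast (by omega)))] at hcoeff
  rw [← hcoeff, dotProduct]
  refine sum_congr rfl fun i _ => ?_
  rw [grsEval_apply, grsEval_apply, eval_mul, div_eq_mul_inv, ← prod_inv_distrib,
    ← Lagrange.nodalWeight, ← hv]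
  ring

variable [DecidableEq F]

theorem card_eval_eq_zero_le (hα : Function.Injective α) {f : F[X]} (hf : f ≠ 0) :
    #{i | f.eval (α i) = 0} ≤ f.natDegree := by
  by_contra! h
  exact hf <| eq_zero_of_degree_lt_of_eval_index_eq_zero _ hα.injOn
    ((degree_le_natDegree).trans_lt (by exact_mod_cast h)) (by simp)

theorem hammingNorm_grsEval (hv : ∀ i, v i ≠ 0) (f : F[X]) :
    hammingNorm (grsEval α v f) = #{i | f.eval (α i) ≠ 0} := by
  simp [hammingNorm, hv]

theorem card_sub_add_one_le_hammingNorm (hα : Function.Injective α) (hv : ∀ i, v i ≠ 0)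
    {k : ℕ} {c : ι → F} (hc : c ∈ grsCode α v k) (hc0 : c ≠ 0) :
    Fintype.card ι - k + 1 ≤ hammingNorm c := by
  obtain ⟨f, hf, rfl⟩ := hc
  have hf0 : f ≠ 0 := by rintro rfl; exact hc0 (map_zero _)
  have hfk : f.natDegree < k := (natDegree_lt_iff_degree_lt hf0).mpr (mem_degreeLT.mp hf)
  have hzeros := card_eval_eq_zero_le hα hf0
  have hsplit := card_filter_add_card_filter_not (s := univ) (fun i => f.eval (α i) = 0)
  rw [card_univ] at hsplit
  have hpos := hammingNorm_pos_iff.mpr hc0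
  rw [hammingNorm_grsEval hv] at hpos ⊢
  simp only [ne_eq] at hpos ⊢
  omega

theorem exists_mem_grsCode_hammingNorm_eq (hα : Function.Injective α) (hv : ∀ i, v i ≠ 0)
    {k : ℕ} (hk₁ : 1 ≤ k) (hk : k ≤ Fintype.card ι) :
    ∃ c ∈ grsCode α v k, c ≠ 0 ∧ hammingNorm c = Fintype.card ι - k + 1 := by
  classical
  obtain ⟨Z, -, hZ⟩ := exists_subset_card_eq (s := (univ : Finset ι)) (n := k - 1)
    (by rw [card_univ]; omega)
  have hzero : ∀ i, (Lagrange.nodal Z α).eval (α i) = 0 ↔ i ∈ Z := by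
    intro i
    refine ⟨fun h => ?_, Lagrange.eval_nodal_at_node⟩
    by_contra hi
    exact Lagrange.eval_nodal_not_at_node (fun j hj => hα.ne (ne_of_mem_of_not_mem hj hi).symm) h
  have hnorm : hammingNorm (grsEval α v (Lagrange.nodal Z α)) = Fintype.card ι - k + 1 := by
    rw [hammingNorm_grsEval hv]
    simp only [ne_eq, hzero]
    rw [filter_not, filter_mem_eq_inter, univ_inter, card_sdiff_of_subset (subset_univ Z),
      card_univ, hZ]
    omega
  refine ⟨_, Submodule.mem_map_of_mem (mem_degreeLT.mpr ?_), ?_, hnorm⟩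
  · rw [Lagrange.degree_nodal, hZ]
    exact_mod_cast (by omega)
  · intro h
    rw [h, hammingNorm_zero] at hnorm
    omega

theorem sInf_hammingNorm_grsCode (hα : Function.Injective α) (hv : ∀ i, v i ≠ 0) {k : ℕ}
    (hk₁ : 1 ≤ k) (hk : k ≤ Fintype.card ι) :
    sInf {w | ∃ c ∈ grsCode α v k, c ≠ 0 ∧ hammingNorm c = w} =
      Fintype.card ι - k + 1 := by
  have hmem := exists_mem_grsCode_hammingNorm_eq hα hv hk₁ hk
  refine le_antisymm (Nat.sInf_le hmem) (le_csInf ⟨_, hmem⟩ ?_)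
  rintro _ ⟨c, hc, hc0, rfl⟩
  exact card_sub_add_one_le_hammingNorm hα hv hc hc0

end GeneralizedReedSolomon

theorem exists_selfDual_mds_of_isSquare_deltaS {F : Type*} [Field F] [DecidableEq F]
    (S : Finset F) (hS : Even #S) (hS₂ : 2 ≤ #S) (hsq : ∀ a ∈ S, IsSquare (deltaS S a)) :
    ∃ C : Submodule F (Fin #S → F),
      ((C : Set (Fin #S → F)) = {v | ∀ c ∈ C, ∑ i, v i * c i = 0}) ∧
      sInf {w : ℕ | ∃ c ∈ C, c ≠ 0 ∧ hammingNorm c = w} = #S - #S / 2 + 1 := by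
  set α : Fin #S → F := fun i => (S.equivFin.symm i : F)
  have hα : Function.Injective α := Subtype.val_injective.comp S.equivFin.symm.injective
  have hroot : ∀ i, ∃ t : F, t ^ 2 = Lagrange.nodalWeight univ α i := fun i => by
    obtain ⟨t, ht⟩ := (hsq _ (S.equivFin.symm i).2).inv
    exact ⟨t, by rw [nodalWeight_equivFin_symm, ht, sq]⟩
  choose v hv using hroot
  have hv0 : ∀ i, v i ≠ 0 := fun i h =>
    Lagrange.nodalWeight_ne_zero hα.injOn (mem_univ i) (by rw [← hv, h, zero_pow two_ne_zero])
  obtain ⟨k, hk⟩ := hS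
  refine ⟨grsCode α v k, coe_eq_setOf_dotProduct_eq_zero ?_ ?_, ?_⟩
  · exact grsCode_dotProduct_eq_zero hα hv (by rw [Fintype.card_fin]; omega)
  · rw [finrank_grsCode hα hv0 (by rw [Fintype.card_fin]; omega), Fintype.card_fin]
    omega
  · rw [sInf_hammingNorm_grsCode hα hv0 (by omega) (by rw [Fintype.card_fin]; omega),
      Fintype.card_fin]
    omega

theorem stmt_14_general (p m : ℕ) (hp : p.Prime) (hodd : p ≠ 2)
    (r : ℕ) (hr : r = p ^ m)
    (F : Type*) [Field F] [Fintype F] [DecidableEq F] (hF : Fintype.card F = r ^ 2) :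
    (∀ l d : ℕ, l ≤ r - 1 → d ≤ 1 →
      (Even (l + d) → 2 ≤ l + d * r → SigmaG F (l + d * r)) ∧
      (Odd (l + d) → SigmaEG F (l + d * r + 1))) ∧
    -- in particular: every even n with 2 ≤ n ≤ 2r is the length of an MDS self-dual code over F_q
    (∀ n : ℕ, Even n → 2 ≤ n → n ≤ 2 * r →
      ∃ C : Submodule F (Fin n → F),
        ((C : Set (Fin n → F)) = {v | ∀ c ∈ C, ∑ i, v i * c i = 0}) ∧
        sInf {w : ℕ | ∃ c ∈ C, c ≠ 0 ∧ hammingNorm c = w} = n - n / 2 + 1) := by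
  have : Fact p.Prime := ⟨hp⟩
  have : CharP F p := charP_of_card_eq_prime_pow (hF.trans (by rw [hr, ← pow_mul]))
  have hrodd : Odd r := hr ▸ (hp.odd_of_ne_two hodd).pow
  have hgood {s : ℕ} (hs : s ≤ 2 * r) := exists_card_eq_isSquare_deltaS (F := F) hr hF hrodd hs
  refine ⟨fun l d hl hd => ?_, fun n hn h2 hle => ?_⟩
  · have hdr : d * r ≤ 1 * r := Nat.mul_le_mul_right r hd
    obtain ⟨S, hS, hsq⟩ := hgood (s := l + d * r) (by omega)
    refine ⟨fun heven h2 => ?_, fun hodd' => ?_⟩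
    · exact ⟨(Nat.even_add_mul_iff_of_odd hrodd).mpr heven, h2, S, hS, Or.inl hsq⟩
    · have hodd'' : Odd (l + d * r) := by
        rwa [← Nat.not_even_iff_odd, Nat.even_add_mul_iff_of_odd hrodd, Nat.not_even_iff_odd]
      refine ⟨hodd''.add_one, by have := hodd''.pos; omega, S, by simpa using hS,
        fun a ha => ?_⟩
      rw [neg_eq_neg_one_mul]
      exact (isSquare_neg_one_of_card_eq_sq hF hrodd).mul (hsq a ha)
  · obtain ⟨S, rfl, hsq⟩ := hgood hle
    exact exists_selfDual_mds_of_isSquare_deltaS S hn h2 hsq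

theorem stmt_14 (p m : ℕ) (hp : p.Prime) (hodd : p ≠ 2) (hm : 0 < m)
    (r : ℕ) (hr : r = p ^ m)
    (F : Type*) [Field F] [Fintype F] [DecidableEq F] (hF : Fintype.card F = r ^ 2) :
    (∀ l d : ℕ, l ≤ r - 1 → d ≤ 1 →
      (Even (l + d) → 2 ≤ l + d * r → SigmaG F (l + d * r)) ∧
      (Odd (l + d) → SigmaEG F (l + d * r + 1))) ∧
    -- in particular: every even n with 2 ≤ n ≤ 2r is the length of an MDS self-dual code over F_q
    (∀ n : ℕ, Even n → 2 ≤ n → n ≤ 2 * r →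
      ∃ C : Submodule F (Fin n → F),
        ((C : Set (Fin n → F)) = {v | ∀ c ∈ C, ∑ i, v i * c i = 0}) ∧
        sInf {w : ℕ | ∃ c ∈ C, c ≠ 0 ∧ hammingNorm c = w} = n - n / 2 + 1) :=
  stmt_14_general p m hp hodd r hr F hF
end

section
/- Let p be an odd prime, r = p^m, and q = r^s with s even. Then for every l with 1 ≤ l ≤ (r − 1)/2, the number l·(q−1)/(r−1) belongs to Σ(g, q) and the number l·(q−1)/(r−1) + 2 belongs to Σ(eg, q). -/
open Finset

/-!
Write `q = r ^ s` and `d = (q - 1) / (r - 1) = 1 + r + ⋯ + r ^ (s - 1)`, so `d ≡ 1 (mod p)`, `d` is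
even, and `x ↦ x ^ d` maps `𝔽_q^*` onto `𝔽_r^*` with fibres the cosets of the `d`-th roots of
unity. Pick a set `W` of `l` squares of `𝔽_r^*` (there are `(r - 1) / 2` of them) and let `S` be
the union of their fibres. Then `∏_{b ∈ S} (X - b) = P (X ^ d)` with `P = ∏_{t ∈ W} (X - t)`,
and the chain rule gives `Δ_S(a) = Δ_W(a ^ d) · d · a ^ (d - 1)`. Since `s` is even, every element
of `𝔽_r^*` is a square in `𝔽_q`; so is every `a ∈ S` (as `a ^ (d (r - 1) / 2) = 1`), hence so are
all the `Δ_S(a)`.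
Adjoining `0` multiplies `Δ_S(a)` by `a` and gives `Δ(0) = ∏_{b ∈ S} b` up to the sign
`(-1) ^ |S| = 1`; as `-1` is a square in `𝔽_q`, `S ∪ {0}` witnesses `Σ(eg, q)`.
-/

open Polynomial

section deltaS

variable {F : Type*} [Field F] [DecidableEq F]

lemma deltaS_eq_eval_derivative {S : Finset F} {a : F} (ha : a ∈ S) :
    deltaS S a = (derivative (∏ b ∈ S, (X - C b))).eval a := by
  simpa [Lagrange.nodal, eval_prod, deltaS] using
    (Lagrange.eval_nodal_derivative_eval_node_eq (v := id) ha).symm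

lemma deltaS_insert_self {S : Finset F} {c : F} (hc : c ∉ S) :
    deltaS (insert c S) c = ∏ b ∈ S, (c - b) := by
  rw [deltaS, erase_insert hc]

lemma deltaS_insert_of_ne {S : Finset F} {a c : F} (hc : c ∉ S) (hac : a ≠ c) :
    deltaS (insert c S) a = (a - c) * deltaS S a := by
  rw [deltaS, erase_insert_of_ne hac.symm, prod_insert fun h ↦ hc (mem_of_mem_erase h), deltaS]

end deltaS

section nthRoots

variable {F : Type*} [Field F] {n : ℕ} {ζ : F}

lemma card_nthRootsFinset_pow [DecidableEq F] (hζ : IsPrimitiveRoot ζ n) {α : F} (hα : α ≠ 0) :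
    #(nthRootsFinset n (α ^ n)) = n := by
  rw [nthRootsFinset_def, Multiset.toFinset_card_of_nodup (hζ.nthRoots_nodup (pow_ne_zero n hα)),
    hζ.card_nthRoots, if_pos ⟨α, rfl⟩]

lemma prod_X_sub_C_nthRootsFinset_pow [DecidableEq F] (hζ : IsPrimitiveRoot ζ n) (hn : 0 < n)
    {α : F} (hα : α ≠ 0) : ∏ b ∈ nthRootsFinset n (α ^ n), (X - C b) = X ^ n - C (α ^ n) := by
  rw [prod_eq_multiset_prod, nthRootsFinset_def,
    Multiset.toFinset_val, (hζ.nthRoots_nodup (pow_ne_zero n hα)).dedup]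
  exact prod_multiset_X_sub_C_of_monic_of_roots_card_eq (monic_X_pow_sub_C _ hn.ne')
    (by rw [← nthRoots, hζ.card_nthRoots, if_pos ⟨α, rfl⟩, natDegree_X_pow_sub_C])

lemma pairwiseDisjoint_nthRootsFinset (hn : 0 < n) (s : Set F) :
    s.PairwiseDisjoint (nthRootsFinset n ·) := by
  intro t _ t' _ htt'
  refine disjoint_left.mpr fun x hx hx' ↦ htt' ?_
  rw [mem_nthRootsFinset hn] at hx hx'
  rw [← hx, hx']

end nthRoots

section biUnion

variable {F : Type*} [Field F] [DecidableEq F] {n : ℕ} {ζ : F} {W : Finset F}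

lemma card_biUnion_nthRootsFinset (hζ : IsPrimitiveRoot ζ n) (hn : 0 < n)
    (hW : ∀ t ∈ W, ∃ α ≠ 0, α ^ n = t) : #(W.biUnion (nthRootsFinset n ·)) = #W * n := by
  rw [card_biUnion (pairwiseDisjoint_nthRootsFinset hn _), sum_const_nat]
  rintro t ht
  obtain ⟨α, hα, rfl⟩ := hW t ht
  exact card_nthRootsFinset_pow hζ hα

lemma deltaS_biUnion_nthRootsFinset (hζ : IsPrimitiveRoot ζ n) (hn : 0 < n)
    (hW : ∀ t ∈ W, ∃ α ≠ 0, α ^ n = t) {a : F} (ha : a ∈ W.biUnion (nthRootsFinset n ·)) :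
    deltaS (W.biUnion (nthRootsFinset n ·)) a = deltaS W (a ^ n) * (n * a ^ (n - 1)) := by
  obtain ⟨t, ht, hat⟩ := mem_biUnion.mp ha
  rw [mem_nthRootsFinset hn] at hat
  have hprod : ∏ b ∈ W.biUnion (nthRootsFinset n ·), (X - C b) =
      (∏ t ∈ W, (X - C t)).comp (X ^ n) := by
    rw [prod_biUnion (pairwiseDisjoint_nthRootsFinset hn _), Polynomial.prod_comp]
    refine prod_congr rfl fun t ht ↦ ?_
    obtain ⟨α, hα, rfl⟩ := hW t ht
    rw [prod_X_sub_C_nthRootsFinset_pow hζ hn hα, sub_comp, X_comp, C_comp]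
  rw [deltaS_eq_eval_derivative ha, hprod, derivative_comp, eval_mul, eval_comp,
    ← deltaS_eq_eval_derivative (by simpa [hat]), derivative_X_pow]
  simp only [eval_mul, eval_C, eval_pow, eval_X, mul_comm]

end biUnion

lemma isSquare_neg_deltaS_insert_zero {F : Type*} [Field F] [DecidableEq F] {S : Finset F}
    (h0 : 0 ∉ S) (hneg : IsSquare (-1 : F)) (heven : Even #S)
    (hS : ∀ a ∈ S, IsSquare a ∧ IsSquare (deltaS S a)) :
    ∀ a ∈ insert 0 S, IsSquare (-deltaS (insert 0 S) a) := by
  intro a ha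
  rcases mem_insert.mp ha with rfl | ha
  · rw [deltaS_insert_self h0]
    simp_rw [zero_sub]
    rw [prod_neg, heven.neg_one_pow, one_mul, neg_eq_neg_one_mul]
    exact hneg.mul <|
      prod_induction _ _ (fun _ _ ↦ IsSquare.mul) IsSquare.one fun b hb ↦ (hS b hb).1
  · rw [deltaS_insert_of_ne h0 (ne_of_mem_of_not_mem ha h0), sub_zero, neg_eq_neg_one_mul]
    exact hneg.mul ((hS a ha).1.mul (hS a ha).2)

lemma sub_pow_expChar_pow_sub_one_eq_one {R : Type*} [CommRing R] [IsDomain R] {p m : ℕ} [ExpChar R p]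
    {x y : R} (hx : x ^ p ^ m = x) (hy : y ^ p ^ m = y) (hxy : x ≠ y) :
    (x - y) ^ (p ^ m - 1) = 1 := by
  refine mul_right_cancel₀ (sub_ne_zero.mpr hxy) ?_
  rw [pow_sub_one_mul (pow_ne_zero m (expChar_pos R p).ne'), sub_pow_expChar_pow, hx, hy, one_mul]

namespace FiniteField

variable {F : Type*} [Field F] [Fintype F]

lemma exists_isPrimitiveRoot : ∃ g : F, IsPrimitiveRoot g (Fintype.card F - 1) := by
  obtain ⟨g, hg⟩ := IsCyclic.exists_ofOrder_eq_natCard (α := Fˣ)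
  refine ⟨g, ?_⟩
  rw [Fintype.card_eq_nat_card, ← Nat.card_units, ← hg, ← orderOf_units]
  exact IsPrimitiveRoot.orderOf _

lemma isSquare_of_pow_eq_one_s17 (hF : ringChar F ≠ 2) {n : ℕ} (hn : n ∣ Fintype.card F / 2)
    {x : F} (hx : x ^ n = 1) : IsSquare x := by
  obtain ⟨k, hk⟩ := hn
  have hn0 : n ≠ 0 := by
    rintro rfl
    have := Fintype.one_lt_card (α := F)
    omega
  rw [isSquare_iff hF (ne_zero_pow hn0 (hx ▸ one_ne_zero)), hk, pow_mul, hx, one_pow]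

lemma isSquare_deltaS_of_pow_eq_self [DecidableEq F] (hF : ringChar F ≠ 2) {p m : ℕ}
    [ExpChar F p] (hdvd : p ^ m - 1 ∣ Fintype.card F / 2) {W : Finset F}
    (hW : ∀ t ∈ W, t ^ p ^ m = t) {t : F} (ht : t ∈ W) : IsSquare (deltaS W t) :=
  prod_induction _ _ (fun _ _ ↦ IsSquare.mul) IsSquare.one fun _ ht' ↦
    isSquare_of_pow_eq_one_s17 hF hdvd <|
      sub_pow_expChar_pow_sub_one_eq_one (hW t ht) (hW _ (mem_of_mem_erase ht')) (ne_of_mem_erase ht').symm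

end FiniteField

lemma IsPrimitiveRoot.exists_finset_card_eq_pow_eq_one {F : Type*} [Field F] [DecidableEq F] {d e : ℕ}
    (hd : d ≠ 0) {g : F} (hg : IsPrimitiveRoot g (d * e)) {l : ℕ} (hl : l ≤ e) :
    ∃ W : Finset F, #W = l ∧ ∀ t ∈ W, t ^ e = 1 ∧ ∃ α ≠ 0, α ^ d = t := by
  obtain rfl | he := Nat.eq_zero_or_pos e
  · exact ⟨∅, by rw [card_empty, Nat.le_zero.mp hl], by simp⟩
  have hde : 0 < d * e := by positivity
  have hω : IsPrimitiveRoot (g ^ d) e := hg.pow hde rfl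
  refine ⟨(range l).image ((g ^ d) ^ ·), ?_, ?_⟩
  · rw [card_image_of_injOn, card_range]
    intro i hi j hj hij
    exact hω.pow_inj ((mem_range.mp hi).trans_le hl) ((mem_range.mp hj).trans_le hl) hij
  · simp only [mem_image, mem_range]
    rintro _ ⟨i, -, rfl⟩
    refine ⟨by rw [← pow_mul, mul_comm, pow_mul, hω.pow_eq_one, one_pow], g ^ i,
      pow_ne_zero _ (hg.ne_zero hde.ne'), by rw [← pow_mul, ← pow_mul, mul_comm]⟩

theorem exists_finset_isSquare_deltaS {F : Type*} [Field F] [Fintype F] [DecidableEq F]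
    {p m d e : ℕ} [ExpChar F p] (hpm : p ^ m = 2 * e + 1) (hq : Fintype.card F = d * (2 * e) + 1)
    (hd : Even d) (hd1 : (d : F) = 1) {l : ℕ} (hl : l ≤ e) :
    ∃ S : Finset F, #S = l * d ∧ 0 ∉ S ∧ ∀ a ∈ S, IsSquare a ∧ IsSquare (deltaS S a) := by
  have hF : ringChar F ≠ 2 := by
    rw [Ne, FiniteField.even_card_iff_char_two, hq, mul_left_comm]
    omega
  have hq2 : Fintype.card F / 2 = e * d := by
    rw [hq, mul_left_comm, mul_comm d, Nat.mul_add_div two_pos]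
    rfl
  have hd0 : 0 < d := Nat.pos_of_ne_zero <| by
    rintro rfl
    simp at hd1
  have hcard : 0 < d * (2 * e) := by
    have := Fintype.one_lt_card (α := F)
    omega
  obtain ⟨g, hg⟩ := FiniteField.exists_isPrimitiveRoot (F := F)
  rw [hq, Nat.add_sub_cancel] at hg
  have hζ : IsPrimitiveRoot (g ^ (2 * e)) d := hg.pow hcard (mul_comm _ _)
  obtain ⟨W, hWcard, hW⟩ := (hg.pow hcard (by ring : d * (2 * e) = 2 * (d * e))).exists_finset_card_eq_pow_eq_one
    hd0.ne' hl
  have hfix : ∀ t ∈ W, t ^ p ^ m = t := fun t ht ↦ by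
    rw [hpm, pow_succ, pow_mul', (hW t ht).1, one_pow, one_mul]
  -- `d` is even, so every element of `𝔽_r^*` is a square in `F`
  have hdvd : p ^ m - 1 ∣ Fintype.card F / 2 := by
    obtain ⟨k, rfl⟩ := hd
    exact ⟨k, by rw [hq2, hpm, Nat.add_sub_cancel]; ring⟩
  have hmem : ∀ a ∈ W.biUnion (nthRootsFinset d ·), a ^ d ∈ W := fun a ha ↦ by
    obtain ⟨t, ht, hat⟩ := mem_biUnion.mp ha
    rwa [(mem_nthRootsFinset hd0 t).mp hat]
  refine ⟨W.biUnion (nthRootsFinset d ·), ?_, fun h0 ↦ ?_, fun a ha ↦ ?_⟩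
  · rw [card_biUnion_nthRootsFinset hζ hd0 fun t ht ↦ (hW t ht).2, hWcard]
  · obtain ⟨α, hα, hαt⟩ := (hW _ (hmem 0 h0)).2
    exact pow_ne_zero d hα (hαt.trans (zero_pow hd0.ne'))
  · have ha_sq : IsSquare a := FiniteField.isSquare_of_pow_eq_one_s17 hF (n := d * e)
      (by rw [hq2, mul_comm]) (by rw [pow_mul, (hW _ (hmem a ha)).1])
    refine ⟨ha_sq, ?_⟩
    rw [deltaS_biUnion_nthRootsFinset hζ hd0 (fun t ht ↦ (hW t ht).2) ha,
      hd1, one_mul]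
    exact (FiniteField.isSquare_deltaS_of_pow_eq_self hF hdvd hfix (hmem a ha)).mul (ha_sq.pow _)

lemma Nat.even_geomSum {r s : ℕ} (hr : Odd r) (hs : Even s) : Even (∑ k ∈ range s, r ^ k) := by
  rw [Nat.even_iff, sum_nat_mod]
  simp [Nat.pow_mod, Nat.odd_iff.mp hr, Nat.even_iff.mp hs]

theorem sigmaG_mul_and_sigmaEG_mul_add_two {F : Type*} [Field F] [Fintype F] [DecidableEq F]
    {p m d e : ℕ} [ExpChar F p] (hpm : p ^ m = 2 * e + 1) (hq : Fintype.card F = d * (2 * e) + 1)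
    (hd : Even d) (hd1 : (d : F) = 1) {l : ℕ} (hl1 : 1 ≤ l) (hl : l ≤ e) :
    SigmaG F (l * d) ∧ SigmaEG F (l * d + 2) := by
  obtain ⟨S, hS, h0, hsq⟩ := exists_finset_isSquare_deltaS hpm hq hd hd1 hl
  have hneg : IsSquare (-1 : F) := by
    obtain ⟨k, rfl⟩ := hd
    rw [FiniteField.isSquare_neg_one_iff, hq, show (k + k) * (2 * e) = 4 * (k * e) by ring]
    omega
  have hld : Even (l * d) := hd.mul_left l
  have hd2 : 2 ≤ d := by
    obtain ⟨k, rfl⟩ := hd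
    rcases k with _ | k
    · simp at hd1
    · omega
  refine ⟨⟨hld, Nat.mul_le_mul hl1 hd2, S, hS, Or.inl fun a ha ↦ (hsq a ha).2⟩,
    ⟨hld.add even_two, by omega, insert 0 S, by rw [card_insert_of_notMem h0, hS]; rfl,
      isSquare_neg_deltaS_insert_zero h0 hneg (hS ▸ hld) hsq⟩⟩

theorem stmt_17 (p m s : ℕ) (hp : p.Prime) (hodd : p ≠ 2) (hm : 0 < m)
    (hse : Even s) (hs0 : 0 < s)
    (r : ℕ) (hr : r = p ^ m)
    (F : Type*) [Field F] [Fintype F] [DecidableEq F] (hF : Fintype.card F = r ^ s)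
    (l : ℕ) (hl1 : 1 ≤ l) (hl2 : l ≤ (r - 1) / 2) :
    SigmaG F (l * ((r ^ s - 1) / (r - 1))) ∧
    SigmaEG F (l * ((r ^ s - 1) / (r - 1)) + 2) := by
  have := Fact.mk hp
  have : CharP F p := charP_of_card_eq_prime_pow (hF.trans (by rw [hr, ← pow_mul]))
  obtain ⟨e, he⟩ : Odd r := hr ▸ (hp.odd_of_ne_two hodd).pow
  rw [← Nat.geomSum_eq (by omega)]
  refine sigmaG_mul_and_sigmaEG_mul_add_two (hr ▸ he) ?_ (Nat.even_geomSum ⟨e, he⟩ hse) ?_ hl1 (by omega)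
  · rw [hF, he, geom_sum_mul_add]
  · have hrF : (r : F) = 0 := by rw [hr, Nat.cast_pow, CharP.cast_eq_zero, zero_pow hm.ne']
    push_cast
    rw [hrF, zero_geom_sum, if_neg hs0.ne']
end
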